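/- arXiv:1307.1849 — 2 statements merged into one kernel-verified Lean document; each statement's English description precedes it below -/
import Mathlib

section
/- Let Z, W₁, …, W_n be i.i.d. standard normal random variables and a ∈ ℝ. Then E[Z · 1{Z / sqrt((1/n)(W₁² + ⋯ + W_n²)) > a}] = (2π)^{-1/2} (1 + a²/n)^{-n/2}. -/
/-!
Conditionally on `W`, the event is `Z > a S` with `S = √((1/n) ∑ Wᵢ²)`, and for a standard
normal `Z` one has `E[Z 1{Z > t}] = φ(t) = (2π)^{-1/2} e^{-t²/2}`, since `φ' = -t φ`. It remains
to average `e^{-a² S²/2} = ∏ᵢ e^{-(a²/2n) Wᵢ²}` over `W`; by independence this is the `n`-th power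
of `E[e^{-b W²}] = (1 + 2b)^{-1/2}` at `b = a²/(2n)`. Conditioning needs `S > 0`, which holds
almost surely because `n > 0`.
-/

open MeasureTheory ProbabilityTheory Real Set Filter Topology

lemma integral_Ioi_mul_exp_neg_sq_div_two (t : ℝ) :
    ∫ x in Ioi t, x * exp (-x ^ 2 / 2) = exp (-t ^ 2 / 2) := by
  have hderiv (x : ℝ) (_ : x ∈ Ici t) :
      HasDerivAt (fun y => -exp (-y ^ 2 / 2)) (x * exp (-x ^ 2 / 2)) x := by
    have hsq : HasDerivAt (fun y : ℝ => -y ^ 2 / 2) (-x) x :=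
      ((hasDerivAt_pow 2 x).neg.div_const 2).congr_deriv (by norm_num [neg_div])
    exact hsq.exp.neg.congr_deriv (by ring)
  have hint : IntegrableOn (fun x => x * exp (-x ^ 2 / 2)) (Ioi t) := by
    convert (integrable_mul_exp_neg_mul_sq (b := 1 / 2) (by norm_num)).integrableOn using 3
    congr 1
    ring
  have hexp : Tendsto (fun x : ℝ => -x ^ 2 / 2) atTop atBot :=
    (tendsto_neg_atTop_atBot.comp (tendsto_pow_atTop two_ne_zero)).atBot_div_const two_pos
  have hlim : Tendsto (fun x => -exp (-x ^ 2 / 2)) atTop (𝓝 0) := by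
    simpa using (tendsto_exp_atBot.comp hexp).neg
  rw [integral_Ioi_of_hasDerivAt_of_tendsto' hderiv hint hlim]
  ring

lemma gaussianPDFReal_zero_one (x : ℝ) :
    gaussianPDFReal 0 1 x = (2 * π) ^ (-(1 : ℝ) / 2) * exp (-x ^ 2 / 2) := by
  rw [gaussianPDFReal, show (-(1 : ℝ) / 2) = -(1 / 2) by norm_num, rpow_neg (by positivity),
    ← sqrt_eq_rpow]
  simp

lemma integral_mul_ite_lt_gaussianReal (t : ℝ) :
    ∫ z, z * (if t < z then (1 : ℝ) else 0) ∂gaussianReal 0 1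
      = (2 * π) ^ (-(1 : ℝ) / 2) * exp (-t ^ 2 / 2) := by
  have h (z : ℝ) : gaussianPDFReal 0 1 z • (z * (if t < z then (1 : ℝ) else 0))
      = (Ioi t).indicator (fun x => (2 * π) ^ (-(1 : ℝ) / 2) * (x * exp (-x ^ 2 / 2))) z := by
    by_cases hz : t < z
    · simp only [gaussianPDFReal_zero_one, hz, ↓reduceIte, mul_one, smul_eq_mul, mem_Ioi,
        indicator_of_mem]
      ring
    · simp [hz]
  simp_rw [integral_gaussianReal_eq_integral_smul one_ne_zero, h,
    integral_indicator measurableSet_Ioi, integral_const_mul,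
    integral_Ioi_mul_exp_neg_sq_div_two]

lemma integral_exp_neg_mul_sq_gaussianReal {b : ℝ} (hb : 0 ≤ b) :
    ∫ x, exp (-b * x ^ 2) ∂gaussianReal 0 1 = (1 + 2 * b) ^ (-(1 : ℝ) / 2) := by
  have h (x : ℝ) : gaussianPDFReal 0 1 x • exp (-b * x ^ 2)
      = (2 * π) ^ (-(1 : ℝ) / 2) * exp (-(b + 1 / 2) * x ^ 2) := by
    rw [gaussianPDFReal_zero_one, smul_eq_mul, mul_assoc, ← exp_add]
    ring_nf
  simp_rw [integral_gaussianReal_eq_integral_smul one_ne_zero, h, integral_const_mul,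
    integral_gaussian]
  have h2 : π / (b + 1 / 2) = 2 * π * (1 + 2 * b)⁻¹ := by field_simp; ring
  rw [h2, sqrt_eq_rpow, mul_rpow (x := 2 * π) (by positivity) (by positivity), ← mul_assoc,
    ← rpow_add (by positivity), inv_rpow (by positivity), ← rpow_neg (by positivity)]
  norm_num

lemma integral_exp_neg_mul_sum_sq_pi_gaussianReal {ι : Type*} [Fintype ι] {b : ℝ} (hb : 0 ≤ b) :
    ∫ w, exp (-b * ∑ i, w i ^ 2) ∂Measure.pi (fun _ : ι => gaussianReal 0 1)
      = (1 + 2 * b) ^ (-(Fintype.card ι : ℝ) / 2) := by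
  simp_rw [Finset.mul_sum, exp_sum]
  rw [integral_fintype_prod_eq_pow (fun x => exp (-b * x ^ 2)),
    integral_exp_neg_mul_sq_gaussianReal hb, ← rpow_natCast, ← rpow_mul (by positivity)]
  ring_nf

lemma ae_pi_sum_sq_pos {ι : Type*} [Fintype ι] [Nonempty ι] {μ : Measure ℝ} [SigmaFinite μ]
    [NullSingletonClass μ] :
    ∀ᵐ w ∂Measure.pi (fun _ : ι => μ), 0 < ∑ i, w i ^ 2 := by
  obtain ⟨i⟩ := ‹Nonempty ι›
  have hnull : Measure.pi (fun _ : ι => μ) (Function.eval i ⁻¹' {0}) = 0 :=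
    Measure.pi_eval_preimage_null _ (measure_singleton 0)
  filter_upwards [measure_eq_zero_iff_ae_notMem.mp hnull] with w hw
  have hwi : w i ≠ 0 := hw
  calc 0 < w i ^ 2 := by positivity
    _ ≤ ∑ j, w j ^ 2 := Finset.single_le_sum (fun j _ => sq_nonneg (w j)) (Finset.mem_univ i)

lemma map_head_tail_eq_prod_pi {Ω E : Type*} [MeasurableSpace Ω] [MeasurableSpace E]
    {P : Measure Ω} {n : ℕ} {X : Fin (n + 1) → Ω → E} {μ : Measure E} [IsProbabilityMeasure μ]
    (hindep : iIndepFun X P) (hlaw : ∀ i, P.map (X i) = μ) :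
    P.map (fun ω => (X 0 ω, fun i : Fin n => X i.succ ω)) = μ.prod (Measure.pi fun _ => μ) := by
  have hX (i : Fin (n + 1)) : AEMeasurable (X i) P :=
    aemeasurable_of_map_neZero (by rw [hlaw i]; infer_instance)
  have htuple : P.map (fun ω i => X i ω) = Measure.pi fun _ => μ := by
    rw [hindep.map_fun_eq_pi_map hX]
    simp_rw [hlaw]
  rw [← (measurePreserving_piFinSuccAbove (fun _ => μ) 0).map_eq, ← htuple,
    AEMeasurable.map_map_of_aemeasurable (by fun_prop) (aemeasurable_pi_lambda _ hX)]
  rfl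

lemma measurable_mul_ite_lt_div_sqrt {β : Type*} [MeasurableSpace β] {q : β → ℝ}
    (hq : Measurable q) (a : ℝ) :
    Measurable fun p : ℝ × β => p.1 * (if a < p.1 / √(q p.2) then (1 : ℝ) else 0) :=
  measurable_fst.mul
    (Measurable.ite (measurableSet_lt measurable_const (by fun_prop)) measurable_const
      measurable_const)

lemma integral_prod_gaussianReal_mul_ite_lt_div_sqrt {β : Type*} [MeasurableSpace β]
    {ν : Measure β} [IsProbabilityMeasure ν] {q : β → ℝ} (hq_meas : Measurable q)
    (hq : ∀ᵐ y ∂ν, 0 < q y) (a : ℝ) :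
    ∫ p, p.1 * (if a < p.1 / √(q p.2) then (1 : ℝ) else 0) ∂(gaussianReal 0 1).prod ν
      = (2 * π) ^ (-(1 : ℝ) / 2) * ∫ y, exp (-(a ^ 2 * q y) / 2) ∂ν := by
  have hint : Integrable (fun p : ℝ × β => p.1 * (if a < p.1 / √(q p.2) then (1 : ℝ) else 0))
      ((gaussianReal 0 1).prod ν) := by
    refine (((memLp_id_gaussianReal 1).integrable le_rfl).comp_fst ν).norm.mono'
      (measurable_mul_ite_lt_div_sqrt hq_meas a).aestronglyMeasurable (ae_of_all _ fun p => ?_)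
    split_ifs <;> simp
  rw [integral_prod_symm _ hint, ← integral_const_mul]
  refine integral_congr_ae ?_
  filter_upwards [hq] with y hy
  simp_rw [lt_div_iff₀ (sqrt_pos.2 hy)]
  rw [integral_mul_ite_lt_gaussianReal, mul_pow, sq_sqrt hy.le]

/-- If `Z, W₁, …, Wₙ` are i.i.d. standard normal and `a ∈ ℝ`, then
`E[Z · 1{Z / √((1/n)(W₁²+⋯+Wₙ²)) > a}] = (2π)^{-1/2} (1 + a²/n)^{-n/2}`. -/
theorem student_hermite_coeff
    {Ω : Type*} [MeasureSpace Ω] [IsProbabilityMeasure (ℙ : Measure Ω)]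
    (n : ℕ) (hn : 0 < n) (Z : Ω → ℝ) (W : Fin n → Ω → ℝ) (a : ℝ)
    (hindep : iIndepFun
      (Fin.cases Z W : Fin (n + 1) → Ω → ℝ) ℙ)
    (hlaw : ∀ i : Fin (n + 1),
      Measure.map (Fin.cases Z W i : Ω → ℝ) ℙ = gaussianReal 0 1) :
    ∫ ω, Z ω *
        (if a < Z ω / Real.sqrt ((1 / n) * ∑ i, (W i ω) ^ 2) then (1 : ℝ) else 0)
        ∂(ℙ : Measure Ω)
      = (2 * Real.pi) ^ (-(1 : ℝ) / 2) * (1 + a ^ 2 / n) ^ (-(n : ℝ) / 2) := by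
  have hpair : Measure.map (fun ω => (Z ω, fun i => W i ω)) ℙ
      = (gaussianReal 0 1).prod (Measure.pi fun _ => gaussianReal 0 1) :=
    map_head_tail_eq_prod_pi hindep hlaw
  set q : (Fin n → ℝ) → ℝ := fun w => (1 / n) * ∑ i, w i ^ 2
  have hq : ∀ᵐ w ∂Measure.pi (fun _ : Fin n => gaussianReal 0 1), 0 < q w := by
    have : Nonempty (Fin n) := ⟨⟨0, hn⟩⟩
    have := nullSingletonClass_gaussianReal (μ := 0) one_ne_zero
    filter_upwards [ae_pi_sum_sq_pos] with w hw
    positivity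
  calc _ = ∫ p, p.1 * (if a < p.1 / √(q p.2) then (1 : ℝ) else 0)
        ∂(Measure.map (fun ω => (Z ω, fun i => W i ω)) ℙ) :=
        (integral_map (aemeasurable_of_map_neZero (by rw [hpair]; infer_instance))
          (measurable_mul_ite_lt_div_sqrt (by fun_prop) a).aestronglyMeasurable).symm
    _ = (2 * π) ^ (-(1 : ℝ) / 2) * ∫ w, exp (-(a ^ 2 / (2 * n)) * ∑ i, w i ^ 2)
        ∂Measure.pi (fun _ : Fin n => gaussianReal 0 1) := by
      rw [hpair, integral_prod_gaussianReal_mul_ite_lt_div_sqrt (by fun_prop) hq]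
      congr 2 with w
      congr 1
      simp only [q]
      ring
    _ = _ := by
      rw [integral_exp_neg_mul_sum_sq_pi_gaussianReal (by positivity), Fintype.card_fin]
      field_simp
end

section
/- Summation theorem for Hermite polynomials: for real numbers a₁,…,a_p not all zero and w₁,…,w_p ∈ ℝ, H_k((Σ_{j=1}^p a_j w_j)/√(Σ_{j=1}^p a_j²)) = k! (Σ_{j=1}^p a_j²)^{-k/2} Σ_{k₁+⋯+k_p = k} ∏_{j=1}^p (a_j^{k_j}/k_j!) H_{k_j}(w_j), where H_k are the probabilists' Hermite polynomials and the sum is over nonnegative integer tuples (k₁,…,k_p) summing to k. -/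
open Finset

/-- The probabilists' Hermite polynomial `H_k` evaluated at a real point. -/
noncomputable def hermiteR (k : ℕ) (x : ℝ) : ℝ :=
  Polynomial.aeval x (Polynomial.hermite k)

namespace HermiteSummationAux

open Polynomial


lemma two_step {P : ℕ → Prop} (h0 : P 0) (h1 : P 1)
    (hs : ∀ n, P n → P (n + 1) → P (n + 2)) : ∀ n, P n := by
  have key : ∀ n, P n ∧ P (n + 1) := by
    intro n
    induction n with
    | zero => exact ⟨h0, h1⟩
    | succ m ih => exact ⟨ih.2, hs m ih.1 ih.2⟩
  exact fun n => (key n).1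

lemma derivative_hermite_succ : ∀ n : ℕ,
    derivative (hermite (n + 1)) = ((n : Polynomial ℤ) + 1) * hermite n := by
  refine two_step ?_ ?_ ?_
  · simp [hermite_one, hermite_zero]
  · simp [hermite_succ, hermite_one, hermite_zero]
    ring
  · intro n ih1 ih2
    have h2 : hermite (n + 2) = X * hermite (n + 1) - ((n : Polynomial ℤ) + 1) * hermite n := by
      rw [hermite_succ, ih1]
    rw [show n + 2 + 1 = (n + 2) + 1 from rfl, hermite_succ (n + 2), derivative_sub,
      derivative_mul, derivative_X, ih2, derivative_mul, ih1, h2]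
    simp only [derivative_add, derivative_one, derivative_natCast, Nat.cast_add, Nat.cast_one]
    ring



lemma hermiteR_zero (x : ℝ) : hermiteR 0 x = 1 := by
  simp [hermiteR, hermite_zero]

lemma hermiteR_one (x : ℝ) : hermiteR 1 x = x := by
  simp [hermiteR, hermite_one]

lemma hermiteR_rec (n : ℕ) (x : ℝ) :
    hermiteR (n + 2) x = x * hermiteR (n + 1) x - ((n : ℝ) + 1) * hermiteR n x := by
  unfold hermiteR
  rw [show n + 2 = (n + 1) + 1 from rfl, hermite_succ (n + 1), derivative_hermite_succ]
  simp [mul_comm]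

noncomputable def He (A B : ℝ) : ℕ → ℝ
  | 0 => 1
  | 1 => A
  | (n + 2) => A * He A B (n + 1) - ((n : ℝ) + 1) * B * He A B n

lemma He_succ (A B : ℝ) (n : ℕ) :
    He A B (n + 1) = A * He A B n - (n : ℝ) * B * He A B (n - 1) := by
  cases n with
  | zero => simp [He]
  | succ m => show He A B (m + 2) = _; rw [He]; push_cast; ring_nf

lemma He_hermiteR (x : ℝ) : ∀ k, He x 1 k = hermiteR k x := by
  refine two_step ?_ ?_ ?_
  · simp [He, hermiteR_zero]
  · simp [He, hermiteR_one]
  · intro n ih1 ih2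
    rw [He, ih1, ih2, hermiteR_rec]
    ring

lemma He_scale (s A B : ℝ) : ∀ k, He (s * A) (s ^ 2 * B) k = s ^ k * He A B k := by
  refine two_step ?_ ?_ ?_
  · simp [He]
  · simp [He]
  · intro n ih1 ih2
    rw [He, ih1, ih2, He]
    ring

lemma He_zero_succ (k : ℕ) : He 0 0 (k + 1) = 0 := by
  cases k with
  | zero => simp [He]
  | succ m => rw [He]; ring



lemma shift (F : ℕ → ℕ → ℝ) (n : ℕ) :
    ∑ ij ∈ antidiagonal (n + 1), (ij.1 : ℝ) / (ij.1.factorial : ℝ) * F ij.1 ij.2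
      = ∑ ij ∈ antidiagonal n, (1 : ℝ) / (ij.1.factorial : ℝ) * F (ij.1 + 1) ij.2 := by
  rw [Finset.Nat.sum_antidiagonal_succ]
  simp only [Nat.cast_zero, zero_div, zero_mul, zero_add]
  refine Finset.sum_congr rfl fun p _ => ?_
  have hfac : ((p.1 + 1 : ℕ) : ℝ) / ((p.1 + 1).factorial : ℝ) = 1 / ((p.1).factorial : ℝ) := by
    rw [Nat.factorial_succ]
    push_cast
    rw [div_eq_div_iff (by positivity) (by positivity)]
    ring
  rw [hfac]

lemma key (C D : ℝ) (h : ℕ → ℝ)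
    (hrec : ∀ m : ℕ, h (m + 1) = C * h m - (m : ℝ) * D * h (m - 1))
    (G : ℕ → ℝ) (k : ℕ) :
    ∑ ij ∈ antidiagonal (k + 2), (ij.1 : ℝ) / (ij.1.factorial : ℝ) * (h ij.1 * G ij.2)
      = C * ∑ ij ∈ antidiagonal (k + 1), (1 : ℝ) / (ij.1.factorial : ℝ) * (h ij.1 * G ij.2)
        - D * ∑ ij ∈ antidiagonal k, (1 : ℝ) / (ij.1.factorial : ℝ) * (h ij.1 * G ij.2) := by
  rw [show k + 2 = (k + 1) + 1 from rfl, shift (fun i j => h i * G j) (k + 1)]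
  have e1 : ∀ p ∈ antidiagonal (k + 1),
      (1 : ℝ) / (p.1.factorial : ℝ) * (h (p.1 + 1) * G p.2)
        = C * ((1 : ℝ) / (p.1.factorial : ℝ) * (h p.1 * G p.2))
          - D * ((p.1 : ℝ) / (p.1.factorial : ℝ) * (h (p.1 - 1) * G p.2)) := by
    intro p _
    rw [hrec]
    ring
  rw [Finset.sum_congr rfl e1, Finset.sum_sub_distrib, ← Finset.mul_sum, ← Finset.mul_sum,
    shift (fun i j => h (i - 1) * G j) k]
  simp only [Nat.add_sub_cancel]

lemma key' (C D : ℝ) (h : ℕ → ℝ)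
    (hrec : ∀ m : ℕ, h (m + 1) = C * h m - (m : ℝ) * D * h (m - 1))
    (G : ℕ → ℝ) (k : ℕ) :
    ∑ ij ∈ antidiagonal (k + 2), (ij.2 : ℝ) / (ij.2.factorial : ℝ) * (h ij.2 * G ij.1)
      = C * ∑ ij ∈ antidiagonal (k + 1), (1 : ℝ) / (ij.2.factorial : ℝ) * (h ij.2 * G ij.1)
        - D * ∑ ij ∈ antidiagonal k, (1 : ℝ) / (ij.2.factorial : ℝ) * (h ij.2 * G ij.1) := by
  have swap : ∀ (n : ℕ) (c : ℕ → ℝ),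
      ∑ ij ∈ antidiagonal n, c ij.2 / (ij.2.factorial : ℝ) * (h ij.2 * G ij.1)
        = ∑ ij ∈ antidiagonal n, c ij.1 / (ij.1.factorial : ℝ) * (h ij.1 * G ij.2) := by
    intro n c
    have := Finset.Nat.sum_antidiagonal_swap
      (n := n) (f := fun q => c q.1 / (q.1.factorial : ℝ) * (h q.1 * G q.2))
    simpa using this
  have swap1 : ∀ (n : ℕ),
      ∑ ij ∈ antidiagonal n, (1 : ℝ) / (ij.2.factorial : ℝ) * (h ij.2 * G ij.1)
        = ∑ ij ∈ antidiagonal n, (1 : ℝ) / (ij.1.factorial : ℝ) * (h ij.1 * G ij.2) := by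
    intro n
    have := Finset.Nat.sum_antidiagonal_swap
      (n := n) (f := fun q => (1 : ℝ) / (q.1.factorial : ℝ) * (h q.1 * G q.2))
    simpa using this
  simp only [swap, swap1]
  exact key C D h hrec G k






noncomputable def U (A₁ B₁ A₂ B₂ : ℝ) (n : ℕ) : ℝ :=
  ∑ ij ∈ antidiagonal n,
    He A₁ B₁ ij.1 / (ij.1.factorial : ℝ) * (He A₂ B₂ ij.2 / (ij.2.factorial : ℝ))

lemma He_add (A₁ B₁ A₂ B₂ : ℝ) : ∀ k : ℕ,
    He (A₁ + A₂) (B₁ + B₂) k = (k.factorial : ℝ) * U A₁ B₁ A₂ B₂ k := by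
  have hrec₁ := He_succ A₁ B₁
  have hrec₂ := He_succ A₂ B₂
  have Urec : ∀ k : ℕ, ((k : ℝ) + 2) * U A₁ B₁ A₂ B₂ (k + 2)
      = (A₁ + A₂) * U A₁ B₁ A₂ B₂ (k + 1) - (B₁ + B₂) * U A₁ B₁ A₂ B₂ k := by
    intro k
    have split : ((k : ℝ) + 2) * U A₁ B₁ A₂ B₂ (k + 2)
        = (∑ ij ∈ antidiagonal (k + 2), (ij.1 : ℝ) / (ij.1.factorial : ℝ)
              * (He A₁ B₁ ij.1 * (He A₂ B₂ ij.2 / (ij.2.factorial : ℝ))))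
          + ∑ ij ∈ antidiagonal (k + 2), (ij.2 : ℝ) / (ij.2.factorial : ℝ)
              * (He A₂ B₂ ij.2 * (He A₁ B₁ ij.1 / (ij.1.factorial : ℝ))) := by
      rw [U, Finset.mul_sum, ← Finset.sum_add_distrib]
      refine Finset.sum_congr rfl fun p hp => ?_
      have hp' : p.1 + p.2 = k + 2 := Finset.HasAntidiagonal.mem_antidiagonal.mp hp
      have hc : ((k : ℝ) + 2) = (p.1 : ℝ) + (p.2 : ℝ) := by exact_mod_cast hp'.symm
      rw [hc]
      ring
    rw [split, key A₁ B₁ (He A₁ B₁) hrec₁ (fun j => He A₂ B₂ j / (j.factorial : ℝ)) k,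
      key' A₂ B₂ (He A₂ B₂) hrec₂ (fun j => He A₁ B₁ j / (j.factorial : ℝ)) k]
    have eU : ∀ n : ℕ,
        (∑ ij ∈ antidiagonal n, (1 : ℝ) / (ij.1.factorial : ℝ)
            * (He A₁ B₁ ij.1 * (He A₂ B₂ ij.2 / (ij.2.factorial : ℝ)))) = U A₁ B₁ A₂ B₂ n := by
      intro n
      rw [U]
      refine Finset.sum_congr rfl fun p _ => by ring
    have eU' : ∀ n : ℕ,
        (∑ ij ∈ antidiagonal n, (1 : ℝ) / (ij.2.factorial : ℝ)
            * (He A₂ B₂ ij.2 * (He A₁ B₁ ij.1 / (ij.1.factorial : ℝ)))) = U A₁ B₁ A₂ B₂ n := by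
      intro n
      rw [U]
      refine Finset.sum_congr rfl fun p _ => by ring
    rw [eU, eU, eU', eU']
    ring
  refine two_step ?_ ?_ ?_
  · simp [He, U]
  · have h1 : antidiagonal 1 = {(0, 1), (1, 0)} := rfl
    rw [He, U, h1]
    simp [He]
    ring
  · intro k ih1 ih2
    have h2 : ((k + 2).factorial : ℝ) = ((k : ℝ) + 2) * ((k + 1).factorial : ℝ) := by
      rw [show k + 2 = (k + 1) + 1 from rfl, Nat.factorial_succ]
      push_cast
      ring
    have h1 : ((k + 1).factorial : ℝ) = ((k : ℝ) + 1) * (k.factorial : ℝ) := by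
      rw [Nat.factorial_succ]
      push_cast
      ring
    rw [He, ih1, ih2, h2]
    linear_combination -(((k + 1).factorial : ℝ)) * Urec k + (B₁ + B₂) * U A₁ B₁ A₂ B₂ k * h1





lemma sum_adT_succ (p k : ℕ) (f : (Fin (p + 1) → ℕ) → ℝ) :
    ∑ μ ∈ Finset.Nat.antidiagonalTuple (p + 1) k, f μ
      = ∑ ij ∈ antidiagonal k, ∑ ν ∈ Finset.Nat.antidiagonalTuple p ij.2,
          f (Fin.cons ij.1 ν) := by
  rw [Finset.sum_sigma']
  refine Finset.sum_nbij'
      (fun (μ : Fin (p + 1) → ℕ) => (⟨(μ 0, ∑ t : Fin p, μ t.succ), Fin.tail μ⟩ : Σ _ : ℕ × ℕ, (Fin p → ℕ)))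
      (fun x => Fin.cons x.1.1 x.2) ?_ ?_ ?_ ?_ ?_
  · intro μ hμ
    rw [Finset.Nat.mem_antidiagonalTuple] at hμ
    rw [Finset.mem_sigma, Finset.HasAntidiagonal.mem_antidiagonal]
    refine ⟨?_, ?_⟩
    · rw [← hμ, Fin.sum_univ_succ]
    · rw [Finset.Nat.mem_antidiagonalTuple]
      rfl
  · intro x hx
    rw [Finset.mem_sigma, Finset.HasAntidiagonal.mem_antidiagonal] at hx
    rw [Finset.Nat.mem_antidiagonalTuple] at *
    rw [Fin.sum_univ_succ]
    simp only [Fin.cons_zero, Fin.cons_succ]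
    rw [hx.2, hx.1]
  · intro μ _
    exact Fin.cons_self_tail μ
  · intro x hx
    rw [Finset.mem_sigma, Finset.HasAntidiagonal.mem_antidiagonal] at hx
    have h2 := Finset.Nat.mem_antidiagonalTuple.mp hx.2
    obtain ⟨⟨i, j⟩, ν⟩ := x
    simp only [Fin.cons_zero, Fin.cons_succ, Fin.tail_cons] at *
    rw [h2]
  · intro μ _
    rw [Fin.cons_self_tail]

lemma He_tuple (p : ℕ) (A B : Fin p → ℝ) : ∀ k : ℕ,
    He (∑ j, A j) (∑ j, B j) k
      = (k.factorial : ℝ) * ∑ ν ∈ Finset.Nat.antidiagonalTuple p k,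
          ∏ j, He (A j) (B j) (ν j) / ((ν j).factorial : ℝ) := by
  induction p with
  | zero =>
    intro k
    simp only [Finset.univ_eq_empty, Finset.sum_empty]
    cases k with
    | zero => simp [He, Finset.Nat.antidiagonalTuple_zero_zero]
    | succ n =>
      rw [Finset.Nat.antidiagonalTuple_zero_succ, He_zero_succ]
      simp
  | succ p ih =>
    intro k
    rw [Fin.sum_univ_succ A, Fin.sum_univ_succ B, He_add, U,
      sum_adT_succ p k (fun μ => ∏ j, He (A j) (B j) (μ j) / ((μ j).factorial : ℝ))]
    congr 1
    refine Finset.sum_congr rfl fun q _ => ?_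
    rw [ih (fun i => A i.succ) (fun i => B i.succ) q.2, Finset.mul_sum, Finset.sum_div,
      Finset.mul_sum]
    refine Finset.sum_congr rfl fun ν _ => ?_
    rw [Fin.prod_univ_succ]
    simp only [Fin.cons_zero, Fin.cons_succ]
    have hq : ((q.2.factorial : ℝ)) ≠ 0 := Nat.cast_ne_zero.mpr (Nat.factorial_ne_zero _)
    field_simp

end HermiteSummationAux

open HermiteSummationAux in
/-- Summation theorem for Hermite polynomials (Gradshteyn–Ryzhik 8.958.1):
`H_k((Σ a_j w_j)/√(Σ a_j²)) = k! (Σ a_j²)^{-k/2} Σ_{k₁+⋯+k_p=k} ∏_j (a_j^{k_j}/k_j!) H_{k_j}(w_j)`. -/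
theorem hermite_summation (p : ℕ) (a w : Fin p → ℝ) (ha : ∃ j, a j ≠ 0) (k : ℕ) :
    hermiteR k ((∑ j, a j * w j) / Real.sqrt (∑ j, (a j) ^ 2))
      = (k.factorial : ℝ) * (∑ j, (a j) ^ 2) ^ (-(k : ℝ) / 2) *
          ∑ ν ∈ Finset.Nat.antidiagonalTuple p k,
            ∏ j, (a j) ^ (ν j) / ((ν j).factorial : ℝ) * hermiteR (ν j) (w j) := by
  obtain ⟨j0, hj0⟩ := ha
  set B : ℝ := ∑ j, (a j) ^ 2 with hBdef
  set A : ℝ := ∑ j, a j * w j with hAdef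
  have hB : 0 < B := by
    refine Finset.sum_pos' (fun j _ => sq_nonneg _) ⟨j0, Finset.mem_univ _, ?_⟩
    exact (sq_nonneg _).lt_of_ne (Ne.symm (pow_ne_zero _ hj0))
  set s : ℝ := Real.sqrt B with hsdef
  have hs : 0 < s := Real.sqrt_pos.mpr hB
  have hs2 : s ^ 2 = B := Real.sq_sqrt hB.le
  have main := He_tuple p (fun j => a j * w j) (fun j => a j ^ 2) k
  have lhs_eq : s ^ k * hermiteR k (A / s) = He A B k := by
    have e1 : s * (A / s) = A := by field_simp
    have e2 : s ^ 2 * 1 = B := by rw [mul_one, hs2]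
    rw [← He_hermiteR, ← He_scale, e1, e2]
  have scale_j : ∀ (j : Fin p) (m : ℕ),
      He (a j * w j) (a j ^ 2) m = a j ^ m * hermiteR m (w j) := by
    intro j m
    have := He_scale (a j) (w j) 1 m
    rw [mul_one] at this
    rw [this, He_hermiteR]
  have main' : s ^ k * hermiteR k (A / s)
      = (k.factorial : ℝ) * ∑ ν ∈ Finset.Nat.antidiagonalTuple p k,
          ∏ j, (a j) ^ (ν j) / ((ν j).factorial : ℝ) * hermiteR (ν j) (w j) := by
    rw [lhs_eq, main]
    congr 1
    refine Finset.sum_congr rfl fun ν _ => Finset.prod_congr rfl fun j _ => ?_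
    rw [scale_j]
    ring
  have hpow : B ^ (-(k : ℝ) / 2) = (s ^ k)⁻¹ := by
    rw [neg_div, Real.rpow_neg hB.le]
    congr 1
    rw [show ((k : ℝ) / 2) = (1 / 2 : ℝ) * (k : ℝ) by ring, Real.rpow_mul hB.le,
      Real.rpow_natCast, hsdef, Real.sqrt_eq_rpow]
  have hsk : s ^ k ≠ 0 := pow_ne_zero _ hs.ne'
  rw [hpow]
  have expand : hermiteR k (A / s) = (s ^ k)⁻¹ * (s ^ k * hermiteR k (A / s)) := by
    field_simp
  rw [expand, main']
  ring
end
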